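/- For independent positive integer-valued random variables σ₁,...,σ_J with finite means, 1 + 2·E[σ_max/σ_min] ≥ 2 + E[σ_max]/min_j E[σ_j]. -/

import Mathlib

/-!
Let `j₀` minimise `E[σ_j]` and write `X = σ_{j₀}`, `N = max_{j ≠ j₀} σ_j`, so that
`σ_max = max X N` with `X` and `N` independent. For fixed `n`, `x ↦ max x n / x` is decreasing
and `x ↦ x` is increasing, so Chebyshev's integral inequality gives
`E[max X n] ≤ E[max X n / X] · E[X]`; integrating over the law of `N` yields
`E[σ_max] / E[X] ≤ E[σ_max / X] ≤ E[σ_max / σ_min]`. Together with `E[σ_max / σ_min] ≥ 1`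
this is the claim.
-/

open MeasureTheory ProbabilityTheory Finset

theorem integral_mul_le_integral_mul_integral_of_antivaryOn {α : Type*} [MeasurableSpace α]
    {ν : Measure α} [IsProbabilityMeasure ν] {f g : α → ℝ} {s : Set α}
    (hfg : AntivaryOn f g s) (hs : ∀ᵐ x ∂ν, x ∈ s)
    (hf : Integrable f ν) (hg : Integrable g ν) (hfg_int : Integrable (fun x => f x * g x) ν) :
    ∫ x, f x * g x ∂ν ≤ (∫ x, f x ∂ν) * ∫ x, g x ∂ν := by
  have hs₂ : ∀ᵐ p ∂ν.prod ν, p.1 ∈ s ∧ p.2 ∈ s :=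
    (Measure.quasiMeasurePreserving_fst.ae hs).and (Measure.quasiMeasurePreserving_snd.ae hs)
  have hnonpos : ∫ p, (f p.1 - f p.2) * (g p.1 - g p.2) ∂ν.prod ν ≤ 0 :=
    integral_nonpos_of_ae <| hs₂.mono fun p hp => hfg.sub_mul_sub_nonpos hp.2 hp.1
  have hdiag₁ := hfg_int.comp_fst ν
  have hdiag₂ := hfg_int.comp_snd ν
  have hcross₁ := hf.mul_prod hg
  have hcross₂ := hg.mul_prod hf
  have hexpand : ∫ p, (f p.1 - f p.2) * (g p.1 - g p.2) ∂ν.prod ν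
      = 2 * ∫ x, f x * g x ∂ν - 2 * ((∫ x, f x ∂ν) * ∫ x, g x ∂ν) := by
    calc ∫ p, (f p.1 - f p.2) * (g p.1 - g p.2) ∂ν.prod ν
        = ∫ p, (f p.1 * g p.1 + f p.2 * g p.2 - (f p.1 * g p.2 + g p.1 * f p.2)) ∂ν.prod ν := by
          congr 1; ext p; ring
      _ = _ := by
        rw [integral_sub (hdiag₁.fun_add hdiag₂) (hcross₁.fun_add hcross₂),
          integral_add hdiag₁ hdiag₂, integral_add hcross₁ hcross₂,
          integral_fun_fst (fun x => f x * g x), integral_fun_snd (fun x => f x * g x),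
          integral_prod_mul, integral_prod_mul]
        simp only [probReal_univ, one_smul]
        ring
  linarith

theorem antivaryOn_max_div_id (c : ℝ) : AntivaryOn (fun x : ℝ => max x c / x) id (Set.Ioi 0) := by
  intro x hx y hy hxy
  simp only [id, Set.mem_Ioi] at *
  rw [div_le_div_iff₀ hy hx]
  rcases le_total c y with h | h
  · rw [max_eq_left h]
    nlinarith [le_max_left x c]
  · rw [max_eq_right h, max_eq_right (hxy.le.trans h)]
    nlinarith

theorem abs_max_div_le_one_add_abs {x : ℝ} (hx : 1 ≤ x) (c : ℝ) : |max x c / x| ≤ 1 + |c| := by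
  have hx₀ : 0 < x := one_pos.trans_le hx
  rw [abs_of_nonneg (div_nonneg (hx₀.le.trans (le_max_left x c)) hx₀.le), div_le_iff₀ hx₀]
  rcases le_total c x with h | h
  · rw [max_eq_left h]; nlinarith [abs_nonneg c]
  · rw [max_eq_right h]; nlinarith [le_abs_self c, abs_nonneg c]

section

variable {Ω : Type*} [MeasurableSpace Ω] {μ : Measure Ω}

theorem const_le_integral_of_ae_const_le [IsProbabilityMeasure μ] {f : Ω → ℝ} {c : ℝ}
    (hf : Integrable f μ) (hc : ∀ᵐ ω ∂μ, c ≤ f ω) : c ≤ ∫ ω, f ω ∂μ := by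
  simpa using integral_mono_ae (integrable_const c) hf hc

theorem integrable_max_div_of_one_le [IsFiniteMeasure μ] {X N : Ω → ℝ} (hX : AEMeasurable X μ)
    (hX₁ : ∀ᵐ ω ∂μ, 1 ≤ X ω) (hN : Integrable N μ) :
    Integrable (fun ω => max (X ω) (N ω) / X ω) μ :=
  ((integrable_const 1).add hN.abs).mono' ((hX.max hN.aemeasurable).div hX).aestronglyMeasurable
    (hX₁.mono fun ω h => abs_max_div_le_one_add_abs h (N ω))

theorem integral_max_le_integral_max_div_mul_integral_id {ν : Measure ℝ} [IsProbabilityMeasure ν]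
    (h₁ : ∀ᵐ x ∂ν, 1 ≤ x) (hid : Integrable id ν) (c : ℝ) :
    ∫ x, max x c ∂ν ≤ (∫ x, max x c / x ∂ν) * ∫ x, x ∂ν := by
  have hmul : ∀ᵐ x ∂ν, max x c / x * x = max x c :=
    h₁.mono fun x hx => div_mul_cancel₀ _ (one_pos.trans_le hx).ne'
  calc ∫ x, max x c ∂ν = ∫ x, max x c / x * x ∂ν := (integral_congr_ae hmul).symm
    _ ≤ _ := integral_mul_le_integral_mul_integral_of_antivaryOn (antivaryOn_max_div_id c)
      (h₁.mono fun x hx => one_pos.trans_le hx)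
      (integrable_max_div_of_one_le aemeasurable_id h₁ (integrable_const c)) hid
      ((hid.sup (integrable_const c)).congr (hmul.mono fun x hx => hx.symm))

theorem ProbabilityTheory.IndepFun.integral_max_le_integral_max_div_mul_integral
    [IsProbabilityMeasure μ] {X N : Ω → ℝ} (hXN : IndepFun X N μ) (hX : Measurable X)
    (hN : Measurable N) (hX₁ : ∀ᵐ ω ∂μ, 1 ≤ X ω) (hXi : Integrable X μ) (hNi : Integrable N μ) :
    ∫ ω, max (X ω) (N ω) ∂μ ≤ (∫ ω, max (X ω) (N ω) / X ω ∂μ) * ∫ ω, X ω ∂μ := by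
  set ν := μ.map X
  set ρ := μ.map N
  have : IsProbabilityMeasure ν := Measure.isProbabilityMeasure_map hX.aemeasurable
  have : IsProbabilityMeasure ρ := Measure.isProbabilityMeasure_map hN.aemeasurable
  have hlaw : μ.map (fun ω => (N ω, X ω)) = ρ.prod ν :=
    (indepFun_iff_map_prod_eq_prod_map_map hN.aemeasurable hX.aemeasurable).mp hXN.symm
  have hNX : AEMeasurable (fun ω => (N ω, X ω)) μ := (hN.prodMk hX).aemeasurable
  set F : ℝ × ℝ → ℝ := fun p => max p.2 p.1
  set G : ℝ × ℝ → ℝ := fun p => max p.2 p.1 / p.2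
  have hF : Measurable F := by fun_prop
  have hG : Measurable G := by fun_prop
  have hFi : Integrable F (ρ.prod ν) := by
    rw [← hlaw, integrable_map_measure hF.aestronglyMeasurable hNX]
    exact hXi.sup hNi
  have hGi : Integrable G (ρ.prod ν) := by
    rw [← hlaw, integrable_map_measure hG.aestronglyMeasurable hNX]
    exact integrable_max_div_of_one_le hX.aemeasurable hX₁ hNi
  have hν₁ : ∀ᵐ x ∂ν, 1 ≤ x := (ae_map_iff hX.aemeasurable measurableSet_Ici).2 hX₁
  have hνi : Integrable id ν :=
    (integrable_map_measure aestronglyMeasurable_id hX.aemeasurable).2 hXi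
  calc ∫ ω, max (X ω) (N ω) ∂μ = ∫ n, ∫ x, F (n, x) ∂ν ∂ρ := by
        rw [← integral_prod F hFi, ← hlaw, integral_map hNX hF.aestronglyMeasurable]
    _ ≤ ∫ n, (∫ x, G (n, x) ∂ν) * ∫ x, x ∂ν ∂ρ :=
        integral_mono hFi.integral_prod_left (hGi.integral_prod_left.mul_const _)
          fun n => integral_max_le_integral_max_div_mul_integral_id hν₁ hνi n
    _ = (∫ ω, max (X ω) (N ω) / X ω ∂μ) * ∫ ω, X ω ∂μ := by
        rw [integral_mul_const, ← integral_prod G hGi, ← hlaw,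
          integral_map hNX hG.aestronglyMeasurable,
          integral_map (f := fun x => x) hX.aemeasurable aestronglyMeasurable_id]

theorem Finset.measurable_sup {ι β δ : Type*} [MeasurableSpace δ] [MeasurableSpace β]
    [SemilatticeSup β] [OrderBot β] [MeasurableSup₂ β] {s : Finset ι} {f : ι → δ → β}
    (hf : ∀ i ∈ s, Measurable (f i)) : Measurable fun x => s.sup fun i => f i x := by
  simpa only [← Finset.sup_apply] using
    Finset.sup_induction measurable_const (fun _ h₁ _ h₂ => h₁.sup h₂) hf

theorem ProbabilityTheory.iIndepFun.indepFun_finsetSup_of_notMem {ι β : Type*}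
    [MeasurableSpace β] [SemilatticeSup β] [OrderBot β] [MeasurableSup₂ β] {f : ι → Ω → β}
    (hf : iIndepFun f μ) (hmeas : ∀ i, Measurable (f i)) {s : Finset ι} {i : ι} (hi : i ∉ s) :
    IndepFun (fun ω => s.sup fun j => f j ω) (f i) μ := by
  have h := (hf.indepFun_finset s {i} (disjoint_singleton_right.mpr hi) hmeas).comp
    (Finset.measurable_sup (s := univ) fun (j : s) _ => measurable_pi_apply j)
    (measurable_pi_apply (⟨i, mem_singleton_self i⟩ : ({i} : Finset ι)))
  convert h using 1
  · ext ω
    simp only [Function.comp_apply, univ_eq_attach]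
    exact (s.sup_attach fun j => f j ω).symm
  · rfl

section FiniteFamily

variable {ι : Type*} [Fintype ι] [Nonempty ι] {σ : ι → Ω → ℕ}

theorem ProbabilityTheory.iIndepFun.integral_sup'_le_integral_sup'_div_mul_integral
    [IsProbabilityMeasure μ] (hindep : iIndepFun σ μ) (hmeas : ∀ i, Measurable (σ i))
    (hint : ∀ i, Integrable (fun ω => (σ i ω : ℝ)) μ) {j : ι} (hj : ∀ᵐ ω ∂μ, 1 ≤ σ j ω) :
    ∫ ω, ((univ.sup' univ_nonempty fun i => σ i ω : ℕ) : ℝ) ∂μ ≤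
      (∫ ω, ((univ.sup' univ_nonempty fun i => σ i ω : ℕ) : ℝ) / σ j ω ∂μ) *
        ∫ ω, (σ j ω : ℝ) ∂μ := by
  classical
  set N : Ω → ℝ := fun ω => ((univ.erase j).sup fun i => σ i ω : ℕ)
  have hsup : ∀ ω,
      ((univ.sup' univ_nonempty fun i => σ i ω : ℕ) : ℝ) = max (σ j ω : ℝ) (N ω) := by
    intro ω
    rw [← Nat.cast_max, sup'_eq_sup, ← sup_insert (f := fun i => σ i ω),
      insert_erase (mem_univ j)]
  have hN : Measurable N :=
    (measurable_of_countable _).comp (Finset.measurable_sup fun i _ => hmeas i)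
  have hNi : Integrable N μ := by
    refine (integrable_finsetSum univ fun i _ => hint i).mono' hN.aestronglyMeasurable
      (ae_of_all _ fun ω => ?_)
    rw [Real.norm_natCast, ← Nat.cast_sum, Nat.cast_le]
    exact Finset.sup_le fun i _ =>
      single_le_sum (f := fun i => σ i ω) (fun _ _ => Nat.zero_le _) (mem_univ i)
  have hXN : IndepFun (fun ω => (σ j ω : ℝ)) N μ :=
    (hindep.indepFun_finsetSup_of_notMem hmeas (notMem_erase j univ)).symm.comp
      (measurable_of_countable _) (measurable_of_countable _)
  simp_rw [hsup]
  exact hXN.integral_max_le_integral_max_div_mul_integral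
    ((measurable_of_countable _).comp (hmeas j)) hN (hj.mono fun ω => Nat.one_le_cast.2)
    (hint j) hNi

theorem integral_sup'_div_le_integral_sup'_div_inf' (hmeas : ∀ i, Measurable (σ i))
    (hpos : ∀ i ω, 1 ≤ σ i ω)
    (hratio : Integrable (fun ω => ((univ.sup' univ_nonempty fun i => σ i ω : ℕ) : ℝ) /
      ((univ.inf' univ_nonempty fun i => σ i ω : ℕ) : ℝ)) μ) (j : ι) :
    ∫ ω, ((univ.sup' univ_nonempty fun i => σ i ω : ℕ) : ℝ) / σ j ω ∂μ ≤
      ∫ ω, ((univ.sup' univ_nonempty fun i => σ i ω : ℕ) : ℝ) /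
        ((univ.inf' univ_nonempty fun i => σ i ω : ℕ) : ℝ) ∂μ := by
  have hbound : ∀ ω, ((univ.sup' univ_nonempty fun i => σ i ω : ℕ) : ℝ) / σ j ω ≤
      ((univ.sup' univ_nonempty fun i => σ i ω : ℕ) : ℝ) /
        ((univ.inf' univ_nonempty fun i => σ i ω : ℕ) : ℝ) := fun ω =>
    div_le_div_of_nonneg_left (Nat.cast_nonneg _)
      (Nat.cast_pos.2 ((lt_inf'_iff _).2 fun i _ => hpos i ω))
      (Nat.cast_le.2 (inf'_le _ (mem_univ j)))
  have hmeas_div : Measurable fun ω =>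
      ((univ.sup' univ_nonempty fun i => σ i ω : ℕ) : ℝ) / σ j ω :=
    (measurable_of_countable fun v : ι → ℕ => ((univ.sup' univ_nonempty v : ℕ) : ℝ) / v j).comp
      (measurable_pi_lambda _ hmeas)
  refine integral_mono (hratio.mono' hmeas_div.aestronglyMeasurable (ae_of_all _ fun ω => ?_))
    hratio hbound
  rw [Real.norm_of_nonneg (by positivity)]
  exact hbound ω

theorem one_le_integral_sup'_div_inf' [IsProbabilityMeasure μ] (hpos : ∀ i ω, 1 ≤ σ i ω)
    (hratio : Integrable (fun ω => ((univ.sup' univ_nonempty fun i => σ i ω : ℕ) : ℝ) /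
      ((univ.inf' univ_nonempty fun i => σ i ω : ℕ) : ℝ)) μ) :
    1 ≤ ∫ ω, ((univ.sup' univ_nonempty fun i => σ i ω : ℕ) : ℝ) /
      ((univ.inf' univ_nonempty fun i => σ i ω : ℕ) : ℝ) ∂μ := by
  obtain ⟨j⟩ := ‹Nonempty ι›
  refine const_le_integral_of_ae_const_le hratio (ae_of_all _ fun ω => ?_)
  rw [one_le_div (Nat.cast_pos.2 ((lt_inf'_iff _).2 fun i _ => hpos i ω)), Nat.cast_le]
  exact (inf'_le _ (mem_univ j)).trans (le_sup' (fun i => σ i ω) (mem_univ j))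

end FiniteFamily

end

/-- For independent positive integer-valued random variables σ₁,...,σ_J with finite means,
1 + 2·E[σ_max/σ_min] ≥ 2 + E[σ_max]/min_j E[σ_j]. -/
theorem stmt_1 {Ω : Type*} [MeasurableSpace Ω] (μ : Measure Ω) [IsProbabilityMeasure μ]
    (J : ℕ) [NeZero J] (σ : Fin J → Ω → ℕ)
    (hpos : ∀ j ω, 1 ≤ σ j ω)
    (hmeas : ∀ j, Measurable (σ j))
    (hindep : iIndepFun σ μ)
    (hint : ∀ j, Integrable (fun ω => (σ j ω : ℝ)) μ)
    (hratio : Integrable (fun ω =>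
      ((Finset.univ.sup' Finset.univ_nonempty fun j => σ j ω : ℕ) : ℝ) /
      ((Finset.univ.inf' Finset.univ_nonempty fun j => σ j ω : ℕ) : ℝ)) μ) :
    2 + (∫ ω, ((Finset.univ.sup' Finset.univ_nonempty fun j => σ j ω : ℕ) : ℝ) ∂μ) /
      (Finset.univ.inf' Finset.univ_nonempty fun j => ∫ ω, (σ j ω : ℝ) ∂μ) ≤
    1 + 2 * ∫ ω, ((Finset.univ.sup' Finset.univ_nonempty fun j => σ j ω : ℕ) : ℝ) /
      ((Finset.univ.inf' Finset.univ_nonempty fun j => σ j ω : ℕ) : ℝ) ∂μ := by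
  obtain ⟨j₀, -, hj₀⟩ := exists_mem_eq_inf' univ_nonempty fun j => ∫ ω, (σ j ω : ℝ) ∂μ
  have hmean_pos : 0 < ∫ ω, (σ j₀ ω : ℝ) ∂μ := one_pos.trans_le <|
    const_le_integral_of_ae_const_le (hint j₀) (ae_of_all _ fun ω => Nat.one_le_cast.2 (hpos j₀ ω))
  have hmean_ratio : (∫ ω, ((univ.sup' univ_nonempty fun j => σ j ω : ℕ) : ℝ) ∂μ) /
      ∫ ω, (σ j₀ ω : ℝ) ∂μ ≤ ∫ ω, ((univ.sup' univ_nonempty fun j => σ j ω : ℕ) : ℝ) /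
        ((univ.inf' univ_nonempty fun j => σ j ω : ℕ) : ℝ) ∂μ := by
    rw [div_le_iff₀ hmean_pos]
    exact (hindep.integral_sup'_le_integral_sup'_div_mul_integral hmeas hint
      (ae_of_all _ (hpos j₀))).trans <| mul_le_mul_of_nonneg_right
        (integral_sup'_div_le_integral_sup'_div_inf' hmeas hpos hratio j₀) hmean_pos.le
  rw [hj₀]
  linarith [one_le_integral_sup'_div_inf' hpos hratio]
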